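/- arXiv:2009.04151 — 4 statements merged into one kernel-verified Lean document; each statement's English description precedes it below -/
import Mathlib

section
/- Suppose A is closed and convex and there exists x₀ ∈ L with R(x₀) ∉ {∅, M}. Then R(x) ≠ M for every x ∈ L. (Proof idea: if R(x) = M for some x and R(y) ≠ ∅, then convexity and closedness of A force R(y) = M, contradicting the hypothesis.) -/
/-!
If `x + M ⊆ A`, then every direction of `M` lies in the asymptotic cone of `A`, and for a closed
convex set a direction of the asymptotic cone can be followed from every point of the set. So a
single point `x` with `R x = M` forces `R y = M` for every `y` with `R y ≠ ∅`.
-/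

section AsymptoticCone

variable {k V : Type*} [Field k] [LinearOrder k] [IsStrictOrderedRing k] [TopologicalSpace k]
  [OrderTopology k] [AddCommGroup V] [Module k V] [TopologicalSpace V] [IsTopologicalAddGroup V]
  [ContinuousSMul k V] {A : Set V} {M : Submodule k V} {x : V}

theorem Submodule.coe_subset_asymptoticCone_of_forall_add_mem (h : ∀ m ∈ M, x + m ∈ A) :
    (M : Set V) ⊆ asymptoticCone k A := by
  let E : AffineSubspace k V := AffineSubspace.mk' x M
  have hEA : (E : Set V) ⊆ A := fun p hp => by
    simpa using h (p - x) ((AffineSubspace.mem_mk').1 hp)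
  calc (M : Set V) ⊆ closure M := subset_closure
    _ = asymptoticCone k (E : Set V) := by
      rw [asymptoticCone_affineSubspace ⟨x, AffineSubspace.self_mem_mk' x M⟩,
        AffineSubspace.direction_mk']
    _ ⊆ asymptoticCone k A := asymptoticCone_mono hEA

theorem Convex.add_mem_of_isClosed_of_forall_add_mem (hconv : Convex k A) (hcl : IsClosed A)
    (h : ∀ m ∈ M, x + m ∈ A) {y m : V} (hy : y ∈ A) (hm : m ∈ M) : y + m ∈ A := by
  have := hconv.smul_vadd_mem_of_isClosed_of_mem_asymptoticCone hcl zero_le_one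
    (M.coe_subset_asymptoticCone_of_forall_add_mem h hm) hy
  rwa [one_smul, vadd_eq_add, add_comm] at this

end AsymptoticCone

theorem stmt_7 {L : Type*} [AddCommGroup L] [Module ℝ L] [TopologicalSpace L]
    [IsTopologicalAddGroup L] [ContinuousSMul ℝ L]
    (A : Set L) (hAcl : IsClosed A) (hAconv : Convex ℝ A) (M : Submodule ℝ L)
    (R : L → Set L) (hR : ∀ x, R x = {m : L | m ∈ M ∧ x + m ∈ A})
    (hx₀ : ∃ x₀ : L, R x₀ ≠ ∅ ∧ R x₀ ≠ (M : Set L)) :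
    ∀ x : L, R x ≠ (M : Set L) := by
  intro x hRx
  obtain ⟨x₀, hne, hnM⟩ := hx₀
  have hxA : ∀ m ∈ M, x + m ∈ A := fun m hm => by
    have : m ∈ R x := hRx ▸ hm
    exact (hR x ▸ this).2
  obtain ⟨m₀, hm₀⟩ := Set.nonempty_iff_ne_empty.mpr hne
  rw [hR] at hm₀ hnM
  refine hnM (Set.Subset.antisymm (fun m hm => hm.1) fun m hm => ⟨hm, ?_⟩)
  have := hAconv.add_mem_of_isClosed_of_forall_add_mem hAcl hxA hm₀.2 (M.sub_mem hm hm₀.1)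
  rwa [add_add_sub_cancel] at this
end

section
/- For every x ∈ L, R(x) = ⋂_{π ∈ K_M⁺ \ {0}} {m ∈ M : π(m) ≥ ρ_π(x)}, where K_M⁺ is the set of continuous linear functionals on M that are nonnegative on K ∩ M and ρ_π(x) = inf{π(m) : m ∈ M, x + m ∈ A}. -/
/-!
Both sides live in `M`, and the inclusion `⊆` is the definition of `ρ_π` as an infimum. Conversely,
let `m ∈ M` with `x + m ∉ A`. The slice `{n ∈ M | x + n ∈ A}` is closed, convex and stable under
adding elements of `K ∩ M`. If it is nonempty, Hahn–Banach in `M` separates `m` strictly from it by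
some `π`; a functional bounded below on a set stable under `K ∩ M` is nonnegative on `K ∩ M`, so
`π ∈ K_M⁺ \ {0}` and `π m < ρ_π(x)`. If the slice is empty, `ρ_π(x) = +∞` for every `π`, and
separating in the slice of `x₀` provides at least one `π ∈ K_M⁺ \ {0}`.
-/

noncomputable def rhoPi {L : Type*} [AddCommGroup L] [Module ℝ L] [TopologicalSpace L]
    (A : Set L) (M : Submodule ℝ L) (π : M →L[ℝ] ℝ) (x : L) : EReal :=
  sInf ((fun n : M => ((π n : ℝ) : EReal)) '' {n : M | x + (n : L) ∈ A})

open Set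

lemma LinearMap.nonneg_of_add_mem_of_bddBelow {E : Type*} [AddCommGroup E] [Module ℝ E]
    {S : Set E} (C : ConvexCone ℝ E) (hSC : ∀ b ∈ S, ∀ k ∈ C, b + k ∈ S) (hS : S.Nonempty)
    (f : E →ₗ[ℝ] ℝ) {u : ℝ} (hu : ∀ b ∈ S, u < f b) {k : E} (hk : k ∈ C) : 0 ≤ f k := by
  obtain ⟨b, hb⟩ := hS
  by_contra! hneg
  -- chosen so that `f (b + t • k) = u + f k < u`
  set t : ℝ := (f b - u) / -f k + 1
  have ht : 0 < t := by
    have : 0 < f b - u := sub_pos.2 (hu b hb)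
    have : 0 < -f k := neg_pos.2 hneg
    positivity
  have hlt : u < f b + t * f k := by
    simpa only [map_add, map_smul, smul_eq_mul] using hu _ (hSC b hb _ (C.smul_mem ht hk))
  have ht_mul : t * f k = -(f b - u) + f k := by
    have : f k ≠ 0 := hneg.ne
    simp only [t]
    field_simp
  linarith

lemma exists_nonneg_dual_strictly_separating {E : Type*} [AddCommGroup E] [Module ℝ E]
    [TopologicalSpace E] [IsTopologicalAddGroup E] [ContinuousSMul ℝ E] [LocallyConvexSpace ℝ E]
    {S : Set E} (hScl : IsClosed S) (hSconv : Convex ℝ S) (C : ConvexCone ℝ E)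
    (hSC : ∀ b ∈ S, ∀ k ∈ C, b + k ∈ S) (hS : S.Nonempty) {n : E} (hn : n ∉ S) :
    ∃ f : StrongDual ℝ E, f ≠ 0 ∧ (∀ k ∈ C, 0 ≤ f k) ∧ ∃ u, f n < u ∧ ∀ b ∈ S, u < f b := by
  obtain ⟨f, u, hnu, hu⟩ := geometric_hahn_banach_point_closed hSconv hScl hn
  refine ⟨f, ?_, fun k hk ↦ (f : E →ₗ[ℝ] ℝ).nonneg_of_add_mem_of_bddBelow C hSC hS hu hk,
    u, hnu, hu⟩
  rintro rfl
  obtain ⟨b, hb⟩ := hS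
  exact (hnu.trans (hu b hb)).false

section Slice

variable {L : Type*} [AddCommGroup L] [Module ℝ L]

/-- The set `R(x)` of the paper, as a subset of `M`. -/
def slice (A : Set L) (M : Submodule ℝ L) (x : L) : Set M :=
  (fun n : M ↦ x + (n : L)) ⁻¹' A

variable {A : Set L} {M : Submodule ℝ L} {x : L}

lemma isClosed_slice [TopologicalSpace L] [ContinuousAdd L] (hA : IsClosed A) :
    IsClosed (slice A M x) :=
  hA.preimage (continuous_const.add continuous_subtype_val)

lemma convex_slice (hA : Convex ℝ A) : Convex ℝ (slice A M x) :=
  (hA.translate_preimage_right x).linear_preimage M.subtype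

lemma add_mem_slice {K : ConvexCone ℝ L} (hAK : ∀ a ∈ A, ∀ k ∈ K, a + k ∈ A) :
    ∀ b ∈ slice A M x, ∀ k ∈ K.comap M.subtype, b + k ∈ slice A M x := by
  intro b hb k hk
  simpa only [slice, mem_preimage, Submodule.coe_add, add_assoc] using hAK _ hb k hk

lemma exists_nonneg_dual_separating_slice [TopologicalSpace L] [IsTopologicalAddGroup L]
    [ContinuousSMul ℝ L] [LocallyConvexSpace ℝ L] {K : ConvexCone ℝ L} (hAcl : IsClosed A)
    (hAconv : Convex ℝ A) (hAK : ∀ a ∈ A, ∀ k ∈ K, a + k ∈ A) (hne : (slice A M x).Nonempty)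
    {n : M} (hn : n ∉ slice A M x) :
    ∃ π : M →L[ℝ] ℝ, π ≠ 0 ∧ (∀ k : M, (k : L) ∈ K → 0 ≤ π k) ∧
      ∃ u, π n < u ∧ ∀ b ∈ slice A M x, u < π b :=
  exists_nonneg_dual_strictly_separating (isClosed_slice hAcl) (convex_slice hAconv)
    (K.comap M.subtype) (add_mem_slice hAK) hne hn

variable [TopologicalSpace L] (π : M →L[ℝ] ℝ)

lemma rhoPi_le {n : M} (hn : n ∈ slice A M x) : rhoPi A M π x ≤ (π n : EReal) :=
  sInf_le ⟨n, hn, rfl⟩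

lemma le_rhoPi {u : ℝ} (hu : ∀ b ∈ slice A M x, u ≤ π b) : (u : EReal) ≤ rhoPi A M π x :=
  le_sInf <| by
    rintro _ ⟨b, hb, rfl⟩
    exact EReal.coe_le_coe (hu b hb)

lemma rhoPi_eq_top (h : slice A M x = ∅) : rhoPi A M π x = ⊤ := by
  rw [rhoPi, show {n : M | x + (n : L) ∈ A} = slice A M x from rfl, h, image_empty, sInf_empty]

end Slice

theorem stmt_13_general {L : Type*} [AddCommGroup L] [Module ℝ L] [TopologicalSpace L]
    [IsTopologicalAddGroup L] [ContinuousSMul ℝ L] [LocallyConvexSpace ℝ L]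
    (K : ConvexCone ℝ L)
    (A : Set L) (hAcl : IsClosed A) (hAconv : Convex ℝ A)
    (hAK : ∀ a ∈ A, ∀ k ∈ K, a + k ∈ A)
    (M : Submodule ℝ L)
    (R : L → Set L) (hR : ∀ x, R x = {m : L | m ∈ M ∧ x + m ∈ A})
    (hx₀ : ∃ x₀ : L, R x₀ ≠ ∅ ∧ R x₀ ≠ (M : Set L)) :
    ∀ x : L, R x =
      ⋂ (π : M →L[ℝ] ℝ) (_ : π ≠ 0) (_ : ∀ k : M, (k : L) ∈ K → 0 ≤ π k),
        {m : L | ∃ hm : m ∈ M, rhoPi A M π x ≤ ((π ⟨m, hm⟩ : ℝ) : EReal)} := by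
  obtain ⟨x₀, hne, hM⟩ := hx₀
  rw [hR] at hne hM
  obtain ⟨_, hm₀, hm₀A⟩ := nonempty_iff_ne_empty.2 hne
  obtain ⟨n₀, hn₀⟩ : ∃ n : M, n ∉ slice A M x₀ := by
    by_contra! h
    exact hM (subset_antisymm (fun _ hm ↦ hm.1) fun m hm ↦ ⟨hm, h ⟨m, hm⟩⟩)
  obtain ⟨π₀, hπ₀, hπ₀K, -⟩ :=
    exists_nonneg_dual_separating_slice hAcl hAconv hAK ⟨⟨_, hm₀⟩, hm₀A⟩ hn₀
  intro x
  ext m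
  simp only [hR, mem_iInter, mem_ofPred_eq]
  refine ⟨fun ⟨hm, hmA⟩ π _ _ ↦ ⟨hm, rhoPi_le π (n := ⟨m, hm⟩) hmA⟩, fun h ↦ ?_⟩
  obtain ⟨hm, hle₀⟩ := h π₀ hπ₀ hπ₀K
  refine ⟨hm, by_contra fun hmA ↦ ?_⟩
  rcases (slice A M x).eq_empty_or_nonempty with hempty | hslice
  · simp [rhoPi_eq_top π₀ hempty] at hle₀
  · obtain ⟨π, hπ, hπK, u, hmu, hu⟩ :=
      exists_nonneg_dual_separating_slice hAcl hAconv hAK hslice (n := ⟨m, hm⟩) hmA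
    obtain ⟨_, hle⟩ := h π hπ hπK
    have := (le_rhoPi π fun b hb ↦ (hu b hb).le).trans hle
    exact (EReal.coe_le_coe_iff.1 this).not_gt hmu

theorem stmt_13 {L : Type*} [AddCommGroup L] [Module ℝ L] [TopologicalSpace L]
    [IsTopologicalAddGroup L] [ContinuousSMul ℝ L] [LocallyConvexSpace ℝ L] [T2Space L]
    (K : ConvexCone ℝ L) (hKcl : IsClosed (K : Set L))
    (hKK : ∀ x : L, ∃ a ∈ K, ∃ b ∈ K, x = a - b)
    (A : Set L) (hAcl : IsClosed A) (hAconv : Convex ℝ A)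
    (hAK : ∀ a ∈ A, ∀ k ∈ K, a + k ∈ A)
    (M : Submodule ℝ L) (hMcl : IsClosed (M : Set L))
    (hMK : ∃ m : L, m ∈ M ∧ m ∈ K ∧ m ≠ 0)
    (R : L → Set L) (hR : ∀ x, R x = {m : L | m ∈ M ∧ x + m ∈ A})
    (hx₀ : ∃ x₀ : L, R x₀ ≠ ∅ ∧ R x₀ ≠ (M : Set L)) :
    ∀ x : L, R x =
      ⋂ (π : M →L[ℝ] ℝ) (_ : π ≠ 0) (_ : ∀ k : M, (k : L) ∈ K → 0 ≤ π k),
        {m : L | ∃ hm : m ∈ M, rhoPi A M π x ≤ ((π ⟨m, hm⟩ : ℝ) : EReal)} :=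
  stmt_13_general K A hAcl hAconv hAK M R hR hx₀
end

section
/- If A is a closed convex subset of L, then A = ⋂_{π ∈ K_M⁺ \ {0}} cl(A + ker π), where ker π = {m ∈ M : π(m) = 0}, provided there exists x ∈ L with R(x) ∉ {∅, M}. (Inclusion ⊆ is trivial; the converse follows from the Hahn–Banach external representation of A.) -/
/-!
Separate a point `x ∉ A` from `A` by a continuous functional `f`. Since `A + K ⊆ A` and `f` is
bounded below on `A`, `f` is nonnegative on `K`. If `f` does not vanish on `M`, its restriction
`π` to `M` is admissible, and `f ≥ u > f x` on `A + ker π`, hence on its closure. If `f` vanishes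
on `M`, any admissible `π` will do; one exists because separating `x₀ + m₂ ∉ A` from
`x₀ + m₁ ∈ A` (with `m₁, m₂ ∈ M`) gives a functional that is nonzero on `m₁ - m₂ ∈ M`.
-/

open Pointwise

section

variable {L : Type*} [AddCommGroup L] [Module ℝ L]

theorem nonneg_of_le_on_of_add_mem {A : Set L} {K : ConvexCone ℝ L} (hA : A.Nonempty)
    (hAK : ∀ a ∈ A, ∀ k ∈ K, a + k ∈ A) {f : L →ₗ[ℝ] ℝ} {u : ℝ} (hf : ∀ a ∈ A, u ≤ f a)
    {k : L} (hk : k ∈ K) : 0 ≤ f k := by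
  by_contra! hneg
  obtain ⟨a, ha⟩ := hA
  set t : ℝ := (f a - u + 1) / -f k
  have ht : 0 < t := div_pos (by linarith [hf a ha]) (by linarith)
  have htk : t * f k = -(f a - u + 1) := by
    simp only [t]
    field_simp [hneg.ne]
  have := hf _ (hAK a ha _ (K.smul_mem ht hk))
  rw [map_add, map_smul, smul_eq_mul] at this
  linarith

variable [TopologicalSpace L]

theorem closure_add_subset_of_le_on {A S : Set L} {f : L →L[ℝ] ℝ} {u : ℝ}
    (hf : ∀ a ∈ A, u ≤ f a) (hS : ∀ s ∈ S, f s = 0) : closure (A + S) ⊆ {y | u ≤ f y} := by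
  refine closure_minimal ?_ (isClosed_le continuous_const f.continuous)
  rintro _ ⟨a, ha, s, hs, rfl⟩
  simpa [hS s hs] using hf a ha

variable [IsTopologicalAddGroup L] [ContinuousSMul ℝ L] [LocallyConvexSpace ℝ L]

theorem exists_separating_nonneg_on_cone {A : Set L} {K : ConvexCone ℝ L} (hAcl : IsClosed A)
    (hAconv : Convex ℝ A) (hA : A.Nonempty) (hAK : ∀ a ∈ A, ∀ k ∈ K, a + k ∈ A) {x : L}
    (hx : x ∉ A) :
    ∃ (f : L →L[ℝ] ℝ) (u : ℝ), f x < u ∧ (∀ a ∈ A, u < f a) ∧ ∀ k ∈ K, 0 ≤ f k := by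
  obtain ⟨f, u, hfx, hfA⟩ := geometric_hahn_banach_point_closed hAconv hAcl hx
  exact ⟨f, u, hfx, hfA, fun k hk =>
    nonneg_of_le_on_of_add_mem (f := f.toLinearMap) hA hAK (fun a ha => (hfA a ha).le) hk⟩

theorem exists_restrict_ne_zero_nonneg_on_cone {A : Set L} {K : ConvexCone ℝ L}
    (hAcl : IsClosed A) (hAconv : Convex ℝ A) (hAK : ∀ a ∈ A, ∀ k ∈ K, a + k ∈ A)
    {M : Submodule ℝ L} {y z : L} (hy : y ∈ A) (hz : z ∉ A) (hyz : y - z ∈ M) :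
    ∃ π : M →L[ℝ] ℝ, π ≠ 0 ∧ ∀ k : M, (k : L) ∈ K → 0 ≤ π k := by
  obtain ⟨g, v, hgz, hgA, hgK⟩ := exists_separating_nonneg_on_cone hAcl hAconv ⟨y, hy⟩ hAK hz
  refine ⟨g.comp M.subtypeL, fun h0 => ?_, fun k hk => hgK k hk⟩
  have hyz0 : g (y - z) = 0 := congrArg (fun π : M →L[ℝ] ℝ => π ⟨y - z, hyz⟩) h0
  linarith [hgA y hy, map_sub g y z]

end

theorem stmt_15_general {L : Type*} [AddCommGroup L] [Module ℝ L] [TopologicalSpace L]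
    [IsTopologicalAddGroup L] [ContinuousSMul ℝ L] [LocallyConvexSpace ℝ L]
    (K : ConvexCone ℝ L)
    (A : Set L) (hAcl : IsClosed A) (hAconv : Convex ℝ A)
    (hAK : ∀ a ∈ A, ∀ k ∈ K, a + k ∈ A)
    (M : Submodule ℝ L)
    (R : L → Set L) (hR : ∀ x, R x = {m : L | m ∈ M ∧ x + m ∈ A})
    (hx₀ : ∃ x₀ : L, R x₀ ≠ ∅ ∧ R x₀ ≠ (M : Set L)) :
    A = ⋂ (π : M →L[ℝ] ℝ) (_ : π ≠ 0) (_ : ∀ k : M, (k : L) ∈ K → 0 ≤ π k),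
          closure (A + {m : L | ∃ hm : m ∈ M, π ⟨m, hm⟩ = 0}) := by
  obtain ⟨x₀, hR₁, hR₂⟩ := hx₀
  obtain ⟨m₁, hm₁M, hm₁A⟩ : ∃ m₁ ∈ M, x₀ + m₁ ∈ A := by
    simpa [hR, ← Set.nonempty_iff_ne_empty, Set.Nonempty] using hR₁
  obtain ⟨m₂, hm₂M, hm₂A⟩ : ∃ m₂ ∈ M, x₀ + m₂ ∉ A := by
    by_contra! h
    exact hR₂ (by ext m; simpa [hR] using h m)
  obtain ⟨π₀, hπ₀, hπ₀K⟩ := exists_restrict_ne_zero_nonneg_on_cone hAcl hAconv hAK hm₁A hm₂A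
    (by simpa using M.sub_mem hm₁M hm₂M)
  refine subset_antisymm (fun a ha => ?_) fun x hx => ?_
  · simp only [Set.mem_iInter]
    exact fun π _ _ => subset_closure ⟨a, ha, 0, ⟨M.zero_mem, map_zero π⟩, add_zero a⟩
  simp only [Set.mem_iInter] at hx
  by_contra hxA
  obtain ⟨f, u, hfx, hfA, hfK⟩ :=
    exists_separating_nonneg_on_cone hAcl hAconv ⟨_, hm₁A⟩ hAK hxA
  have absurd_of_vanishes_on_ker (π : M →L[ℝ] ℝ) (hπ : π ≠ 0) (hπK : ∀ k : M, (k : L) ∈ K → 0 ≤ π k)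
      (hker : ∀ m (hm : m ∈ M), π ⟨m, hm⟩ = 0 → f m = 0) : False := by
    have := closure_add_subset_of_le_on (S := {m : L | ∃ hm : m ∈ M, π ⟨m, hm⟩ = 0})
      (fun a ha => (hfA a ha).le) (fun m ⟨hm, hπm⟩ => hker m hm hπm) (hx π hπ hπK)
    exact (lt_irrefl u) (this.trans_lt hfx)
  by_cases hfM : f.comp M.subtypeL = 0
  · exact absurd_of_vanishes_on_ker π₀ hπ₀ hπ₀K fun m hm _ => congrArg (fun π : M →L[ℝ] ℝ => π ⟨m, hm⟩) hfM
  · exact absurd_of_vanishes_on_ker _ hfM (fun k hk => hfK k hk) fun m hm h => h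

theorem stmt_15 {L : Type*} [AddCommGroup L] [Module ℝ L] [TopologicalSpace L]
    [IsTopologicalAddGroup L] [ContinuousSMul ℝ L] [LocallyConvexSpace ℝ L] [T2Space L]
    (K : ConvexCone ℝ L) (hKcl : IsClosed (K : Set L))
    (hKK : ∀ x : L, ∃ a ∈ K, ∃ b ∈ K, x = a - b)
    (A : Set L) (hAcl : IsClosed A) (hAconv : Convex ℝ A)
    (hAK : ∀ a ∈ A, ∀ k ∈ K, a + k ∈ A)
    (M : Submodule ℝ L) (hMcl : IsClosed (M : Set L))
    (hMK : ∃ m : L, m ∈ M ∧ m ∈ K ∧ m ≠ 0)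
    (R : L → Set L) (hR : ∀ x, R x = {m : L | m ∈ M ∧ x + m ∈ A})
    (hx₀ : ∃ x₀ : L, R x₀ ≠ ∅ ∧ R x₀ ≠ (M : Set L)) :
    A = ⋂ (π : M →L[ℝ] ℝ) (_ : π ≠ 0) (_ : ∀ k : M, (k : L) ∈ K → 0 ≤ π k),
          closure (A + {m : L | ∃ hm : m ∈ M, π ⟨m, hm⟩ = 0}) :=
  stmt_15_general K A hAcl hAconv hAK M R hR hx₀
end

section
/- For every π ∈ K_M⁺ \ {0} with ext(π) ∩ barr(A) ≠ ∅, the functional ρ*_π(x) = sup{σ_A(ψ) - ψ(x) : ψ ∈ L', ψ|_M = π} is the lower semicontinuous hull of ρ_π(x) = inf{π(m) : m ∈ M, x + m ∈ A}; i.e., ρ*_π is lower semicontinuous, ρ*_π ≤ ρ_π, and any lower semicontinuous f ≤ ρ_π satisfies f ≤ ρ*_π. -/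
noncomputable def suppFn {L : Type*} [AddCommGroup L] [Module ℝ L] [TopologicalSpace L]
    (S : Set L) (ψ : L →L[ℝ] ℝ) : EReal :=
  sInf ((fun x : L => ((ψ x : ℝ) : EReal)) '' S)

noncomputable def rhoStar {L : Type*} [AddCommGroup L] [Module ℝ L] [TopologicalSpace L]
    (A : Set L) (M : Submodule ℝ L) (π : M →L[ℝ] ℝ) (x : L) : EReal :=
  sSup ((fun ψ : L →L[ℝ] ℝ => suppFn A ψ - ((ψ x : ℝ) : EReal)) ''
    {ψ : L →L[ℝ] ℝ | ∀ m : M, ψ (m : L) = π m})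

/-!
`ρ*_π` is a supremum of the continuous affine functions `x ↦ σ_A(ψ) - ψ x`, and each of them
lies below `ρ_π` because `ψ (x + m) = ψ x + π m` for `ψ ∈ ext(π)`, `m ∈ M`.

For the hull property, let `f ≤ ρ_π` be lower semicontinuous and `ρ*_π x < r < f x`. The convex set
`E = {(y, t) | ∃ m ∈ M, y + m ∈ A ∧ π m ≤ t}` lies in the closed epigraph of `f`, so `(x, r)` can
be strictly separated from it by some `(y, t) ↦ φ y + t c`. Since `E` is nonempty and stable under
`(y, t) ↦ (y, t + τ)` for `τ ≥ 0` and `(y, t) ↦ (y - m, t + π m)` for `m ∈ M`, we get `c ≤ 0` and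
`φ = c π` on `M`. Then, for `ψ₀ ∈ ext(π) ∩ barr(A)` and `λ ≥ 0` large, the functional
`(ψ₀ - λ φ) / (1 - λ c) ∈ ext(π)` yields an affine minorant exceeding `r` at `x`; this also covers
a vertical separating hyperplane (`c = 0`), where `ext(π) ∩ barr(A) ≠ ∅` is essential.
-/

theorem nonpos_of_forall_add_mul_lt {u v s : ℝ} (h : ∀ t : ℝ, 0 ≤ t → u + t * v < s) :
    v ≤ 0 := by
  by_contra! hv
  have hus : u < s := by simpa using h 0 le_rfl
  have := h ((s - u) / v) (div_nonneg (sub_nonneg.2 hus.le) hv.le)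
  rw [div_mul_cancel₀ _ hv.ne'] at this
  linarith

theorem eq_zero_of_forall_add_mul_lt {u v s : ℝ} (h : ∀ t : ℝ, u + t * v < s) : v = 0 :=
  le_antisymm (nonpos_of_forall_add_mul_lt fun t _ => h t)
    (neg_nonpos.1 <| nonpos_of_forall_add_mul_lt fun t _ => by simpa using h (-t))

section

variable {L : Type*} [AddCommGroup L] [Module ℝ L] [TopologicalSpace L]

theorem suppFn_le {S : Set L} (ψ : L →L[ℝ] ℝ) {a : L} (ha : a ∈ S) :
    suppFn S ψ ≤ ψ a :=
  sInf_le ⟨a, ha, rfl⟩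

theorem le_suppFn {S : Set L} {ψ : L →L[ℝ] ℝ} {β : ℝ} (h : ∀ a ∈ S, β ≤ ψ a) :
    (β : EReal) ≤ suppFn S ψ :=
  le_sInf <| by
    rintro _ ⟨a, ha, rfl⟩
    exact EReal.coe_le_coe_iff.2 (h a ha)

theorem exists_forall_le_of_suppFn_ne_bot {S : Set L} {ψ : L →L[ℝ] ℝ} (h : suppFn S ψ ≠ ⊥) :
    ∃ β : ℝ, ∀ a ∈ S, β ≤ ψ a := by
  obtain ⟨β, -, hβ⟩ := EReal.lt_iff_exists_real_btwn.1 (bot_lt_iff_ne_bot.2 h)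
  exact ⟨β, fun a ha => EReal.coe_le_coe_iff.1 (hβ.le.trans (suppFn_le ψ ha))⟩

variable {A : Set L} {M : Submodule ℝ L} {π : M →L[ℝ] ℝ}

theorem rhoPi_le_s17 {x : L} {m : M} (h : x + m ∈ A) : rhoPi A M π x ≤ π m :=
  sInf_le ⟨m, h, rfl⟩

theorem le_rhoStar {ψ : L →L[ℝ] ℝ} (hψ : ∀ m : M, ψ m = π m) (x : L) :
    suppFn A ψ - ψ x ≤ rhoStar A M π x :=
  le_sSup ⟨ψ, hψ, rfl⟩

theorem coe_lt_rhoStar {ψ : L →L[ℝ] ℝ} (hψ : ∀ m : M, ψ m = π m) {β r : ℝ} {x : L}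
    (hβ : ∀ a ∈ A, β ≤ ψ a) (hr : r < β - ψ x) : (r : EReal) < rhoStar A M π x :=
  calc (r : EReal) < ((β - ψ x : ℝ) : EReal) := EReal.coe_lt_coe_iff.2 hr
    _ ≤ suppFn A ψ - ψ x := by rw [EReal.coe_sub]; exact EReal.sub_le_sub (le_suppFn hβ) le_rfl
    _ ≤ rhoStar A M π x := le_rhoStar hψ x

theorem lowerSemicontinuous_rhoStar : LowerSemicontinuous (rhoStar A M π) := by
  have hrho : rhoStar A M π = fun x => ⨆ (ψ : L →L[ℝ] ℝ) (_ : ∀ m : M, ψ m = π m),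
      suppFn A ψ - ψ x := by
    ext x
    exact sSup_image
  rw [hrho]
  refine lowerSemicontinuous_biSup fun ψ _ => ?_
  exact EReal.lowerSemicontinuous_add.comp
    (continuous_const.prodMk (continuous_neg.comp (continuous_coe_real_ereal.comp ψ.continuous)))

theorem rhoStar_le_rhoPi (x : L) : rhoStar A M π x ≤ rhoPi A M π x := by
  refine sSup_le ?_
  rintro _ ⟨ψ, hψ, rfl⟩
  refine le_sInf ?_
  rintro _ ⟨m, hm, rfl⟩
  have hψm : ψ (x + m) = ψ x + π m := by rw [map_add, hψ m]
  calc suppFn A ψ - ψ x ≤ ((ψ x + π m : ℝ) : EReal) - ψ x :=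
        EReal.sub_le_sub (hψm ▸ suppFn_le ψ hm) le_rfl
    _ = π m := by rw [← EReal.coe_sub, add_sub_cancel_left]

/-- Contains the strict epigraph of `rhoPi A M π` and is contained in its epigraph. -/
def rhoPiEpigraph (A : Set L) (M : Submodule ℝ L) (π : M →L[ℝ] ℝ) : Set (L × ℝ) :=
  {p | ∃ m : M, p.1 + m ∈ A ∧ π m ≤ p.2}

theorem convex_rhoPiEpigraph (hA : Convex ℝ A) : Convex ℝ (rhoPiEpigraph A M π) := by
  rintro ⟨y, t⟩ ⟨m, hm, hmt⟩ ⟨y', t'⟩ ⟨m', hm', hmt'⟩ θ θ' hθ hθ' hθθ'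
  refine ⟨θ • m + θ' • m', ?_, ?_⟩
  · convert hA hm hm' hθ hθ' hθθ' using 1
    simp only [Prod.fst_add, Prod.smul_fst, Submodule.coe_add, Submodule.coe_smul, smul_add]
    abel
  · simp only [map_add, map_smul, smul_eq_mul, Prod.snd_add, Prod.smul_snd]
    gcongr

theorem rhoPiEpigraph_subset {f : L → EReal} (hf : ∀ x, f x ≤ rhoPi A M π x) :
    rhoPiEpigraph A M π ⊆ {p | f p.1 ≤ p.2} := by
  rintro ⟨y, t⟩ ⟨m, hm, hmt⟩
  exact (hf y).trans <| (rhoPi_le_s17 hm).trans <| EReal.coe_le_coe_iff.2 hmt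

theorem exists_separation_rhoPiEpigraph [IsTopologicalAddGroup L] [ContinuousSMul ℝ L]
    [LocallyConvexSpace ℝ L] (hA : Convex ℝ A) {x : L} {r : ℝ}
    (hx : (x, r) ∉ closure (rhoPiEpigraph A M π)) :
    ∃ (φ : L →L[ℝ] ℝ) (c s : ℝ),
      (∀ (y : L) (m : M) (t : ℝ), y + m ∈ A → π m ≤ t → φ y + t * c < s) ∧ s < φ x + r * c := by
  obtain ⟨Φ, s, hΦE, hΦx⟩ :=
    geometric_hahn_banach_closed_point (convex_rhoPiEpigraph hA).closure isClosed_closure hx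
  have hΦ (y : L) (t : ℝ) : Φ (y, t) = Φ.comp (.inl ℝ L ℝ) y + t * Φ (0, 1) := by
    rw [← Φ.comp_inl_add_comp_inr (y, t)]
    simpa using (Φ.comp (.inr ℝ L ℝ)).map_smul t 1
  refine ⟨Φ.comp (.inl ℝ L ℝ), Φ (0, 1), s, fun y m t hm hmt => ?_, hΦ x r ▸ hΦx⟩
  exact hΦ y t ▸ hΦE _ (subset_closure ⟨m, hm, hmt⟩)

section

variable {φ : L →L[ℝ] ℝ} {c s : ℝ}
  (hE : ∀ (y : L) (m : M) (t : ℝ), y + m ∈ A → π m ≤ t → φ y + t * c < s)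
include hE

theorem nonpos_of_forall_rhoPiEpigraph {a : L} (ha : a ∈ A) : c ≤ 0 :=
  nonpos_of_forall_add_mul_lt fun t ht => hE a 0 t (by simpa using ha) (by simpa using ht)

theorem eq_mul_of_forall_rhoPiEpigraph {a : L} (ha : a ∈ A) (m : M) : φ m = c * π m := by
  have hline (τ : ℝ) : φ a + τ * (π m * c - φ m) < s := by
    have := hE (a - (τ • m : M)) (τ • m) (τ * π m) (by simpa using ha) (by simp)
    simp only [map_sub, Submodule.coe_smul, map_smul, smul_eq_mul] at this
    linarith
  linarith [eq_zero_of_forall_add_mul_lt hline]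

theorem le_of_forall_rhoPiEpigraph {a : L} (ha : a ∈ A) : φ a ≤ s := by
  simpa using (hE a 0 0 (by simpa using ha) (by simp)).le

end

theorem coe_lt_rhoStar_of_separation {ψ₀ : L →L[ℝ] ℝ} (hψ₀ : ∀ m : M, ψ₀ m = π m) {β₀ : ℝ}
    (hβ₀ : ∀ a ∈ A, β₀ ≤ ψ₀ a) {φ : L →L[ℝ] ℝ} {c s r : ℝ} {x : L} (hc : c ≤ 0)
    (hφM : ∀ m : M, φ m = c * π m) (hφA : ∀ a ∈ A, φ a ≤ s) (hx : s < φ x + r * c) :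
    (r : EReal) < rhoStar A M π x := by
  obtain ⟨n, hn⟩ := exists_nat_gt ((r - β₀ + ψ₀ x) / (φ x + r * c - s))
  obtain ⟨lam, hlam, hgap⟩ : ∃ lam : ℝ, 0 ≤ lam ∧ r - β₀ + ψ₀ x < lam * (φ x + r * c - s) :=
    ⟨n, n.cast_nonneg, (div_lt_iff₀ (by linarith)).1 hn⟩
  have hd : 0 < 1 - lam * c := by nlinarith
  refine coe_lt_rhoStar (ψ := (1 - lam * c)⁻¹ • (ψ₀ - lam • φ))
    (β := (1 - lam * c)⁻¹ * (β₀ - lam * s)) (fun m => ?_) (fun a ha => ?_) ?_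
  · simp only [smul_apply, sub_apply, hψ₀, hφM, smul_eq_mul]
    field_simp
  · simp only [smul_apply, sub_apply, smul_eq_mul]
    gcongr
    · exact hβ₀ a ha
    · exact hφA a ha
  · simp only [smul_apply, sub_apply, smul_eq_mul]
    rw [← mul_sub, lt_inv_mul_iff₀ hd]
    linarith

theorem le_rhoStar_of_le_rhoPi [IsTopologicalAddGroup L] [ContinuousSMul ℝ L]
    [LocallyConvexSpace ℝ L] (hA : Convex ℝ A) {a₀ : L} (ha₀ : a₀ ∈ A) {ψ₀ : L →L[ℝ] ℝ}
    (hψ₀ : ∀ m : M, ψ₀ m = π m) (hψ₀A : suppFn A ψ₀ ≠ ⊥) {f : L → EReal}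
    (hf : LowerSemicontinuous f) (hfρ : ∀ x, f x ≤ rhoPi A M π x) (x : L) :
    f x ≤ rhoStar A M π x := by
  by_contra! hlt
  obtain ⟨r, hρr, hrf⟩ := EReal.lt_iff_exists_real_btwn.1 hlt
  have hfcl : IsClosed {p : L × ℝ | f p.1 ≤ p.2} :=
    hf.isClosed_epigraph.preimage (continuous_fst.prodMk (continuous_coe_real_ereal.comp
      continuous_snd))
  have hxr : (x, r) ∉ closure (rhoPiEpigraph A M π) := fun h =>
    (closure_minimal (rhoPiEpigraph_subset hfρ) hfcl h).not_gt hrf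
  obtain ⟨φ, c, s, hE, hx⟩ := exists_separation_rhoPiEpigraph hA hxr
  obtain ⟨β₀, hβ₀⟩ := exists_forall_le_of_suppFn_ne_bot hψ₀A
  exact hρr.not_gt <| coe_lt_rhoStar_of_separation hψ₀ hβ₀
    (nonpos_of_forall_rhoPiEpigraph hE ha₀) (eq_mul_of_forall_rhoPiEpigraph hE ha₀)
    (fun _ ha => le_of_forall_rhoPiEpigraph hE ha) hx

end

theorem stmt_17_general {L : Type*} [AddCommGroup L] [Module ℝ L] [TopologicalSpace L]
    [IsTopologicalAddGroup L] [ContinuousSMul ℝ L] [LocallyConvexSpace ℝ L]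
    (A : Set L) (hAconv : Convex ℝ A)
    (M : Submodule ℝ L)
    (hx₀ : ∃ x₀ : L, {m : L | m ∈ M ∧ x₀ + m ∈ A} ≠ ∅ ∧
      {m : L | m ∈ M ∧ x₀ + m ∈ A} ≠ (M : Set L))
    (π : M →L[ℝ] ℝ)
    (hext : ∃ ψ : L →L[ℝ] ℝ, (∀ m : M, ψ (m : L) = π m) ∧ suppFn A ψ ≠ ⊥) :
    LowerSemicontinuous (rhoStar A M π) ∧
    (∀ x : L, rhoStar A M π x ≤ rhoPi A M π x) ∧
    (∀ f : L → EReal, LowerSemicontinuous f → (∀ x, f x ≤ rhoPi A M π x) →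
      ∀ x, f x ≤ rhoStar A M π x) := by
  obtain ⟨x₀, hR, -⟩ := hx₀
  obtain ⟨m₀, -, ha₀⟩ := Set.nonempty_iff_ne_empty.2 hR
  obtain ⟨ψ₀, hψ₀, hψ₀A⟩ := hext
  exact ⟨lowerSemicontinuous_rhoStar, rhoStar_le_rhoPi,
    fun f hf hfρ => le_rhoStar_of_le_rhoPi hAconv ha₀ hψ₀ hψ₀A hf hfρ⟩

theorem stmt_17 {L : Type*} [AddCommGroup L] [Module ℝ L] [TopologicalSpace L]
    [IsTopologicalAddGroup L] [ContinuousSMul ℝ L] [LocallyConvexSpace ℝ L] [T2Space L]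
    (K : ConvexCone ℝ L) (hKcl : IsClosed (K : Set L))
    (hKK : ∀ x : L, ∃ a ∈ K, ∃ b ∈ K, x = a - b)
    (A : Set L) (hAcl : IsClosed A) (hAconv : Convex ℝ A)
    (hAK : ∀ a ∈ A, ∀ k ∈ K, a + k ∈ A)
    (M : Submodule ℝ L) (hMcl : IsClosed (M : Set L))
    (hMK : ∃ m : L, m ∈ M ∧ m ∈ K ∧ m ≠ 0)
    (hx₀ : ∃ x₀ : L, {m : L | m ∈ M ∧ x₀ + m ∈ A} ≠ ∅ ∧
      {m : L | m ∈ M ∧ x₀ + m ∈ A} ≠ (M : Set L))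
    (π : M →L[ℝ] ℝ) (hπ0 : π ≠ 0) (hπK : ∀ k : M, (k : L) ∈ K → 0 ≤ π k)
    (hext : ∃ ψ : L →L[ℝ] ℝ, (∀ m : M, ψ (m : L) = π m) ∧ suppFn A ψ ≠ ⊥) :
    LowerSemicontinuous (rhoStar A M π) ∧
    (∀ x : L, rhoStar A M π x ≤ rhoPi A M π x) ∧
    (∀ f : L → EReal, LowerSemicontinuous f → (∀ x, f x ≤ rhoPi A M π x) →
      ∀ x, f x ≤ rhoStar A M π x) :=
  stmt_17_general A hAconv M hx₀ π hext
end
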